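/- Let α > η > 1 and C₆, C₇, δ > 0. Suppose h : [0,T] → [0,∞) is absolutely continuous, increasing, h(0)=0, and satisfies 1 ≤ C₇ δ^{1/η} h'(t) (C₆ δ + h(t)^α)^{−1/η} for a.e. t ∈ [0,T]. Then T ≤ C₈ δ^{1/α}, where C₈ = C₇ ∫₀^∞ (C₆ + x^α)^{−1/η} dx < ∞. -/

import Mathlib

open MeasureTheory
open Set

section FinalStabilityHelpers

lemma phi_contAt {c α q : ℝ} (hc : 0 < c) (hα : 0 < α) {u : ℝ} (hu : 0 ≤ u) :
    ContinuousAt (fun v : ℝ => (c + v ^ α) ^ q) u := by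
  have h1 : ContinuousAt (fun v : ℝ => c + v ^ α) u :=
    continuousAt_const.add (Real.continuousAt_rpow_const u α (Or.inr hα.le))
  have h2 : c + u ^ α ≠ 0 :=
    ne_of_gt (lt_of_lt_of_le hc (le_add_of_nonneg_right (Real.rpow_nonneg hu α)))
  exact (Real.continuousAt_rpow_const _ q (Or.inl h2)).comp (x := u) h1

lemma phi_pos {c α q : ℝ} (hc : 0 < c) {u : ℝ} (hu : 0 ≤ u) :
    0 < (c + u ^ α) ^ q :=
  Real.rpow_pos_of_pos (lt_of_lt_of_le hc (le_add_of_nonneg_right (Real.rpow_nonneg hu α))) q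

lemma phi_anti {c α q : ℝ} (hc : 0 < c) (hα : 0 ≤ α) (hq : q ≤ 0) {u v : ℝ}
    (hu : 0 ≤ u) (huv : u ≤ v) : (c + v ^ α) ^ q ≤ (c + u ^ α) ^ q :=
  Real.rpow_le_rpow_of_nonpos
    (lt_of_lt_of_le hc (le_add_of_nonneg_right (Real.rpow_nonneg hu α)))
    ((add_le_add_iff_left c).mpr (Real.rpow_le_rpow hu huv hα)) hq

lemma phi_integrable {c α η : ℝ} (hc : 0 < c) (hη : 1 < η) (hαη : η < α) :
    IntegrableOn (fun u : ℝ => (c + u ^ α) ^ (-(1/η))) (Set.Ioi 0) := by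
  have hη0 : (0:ℝ) < η := lt_trans one_pos hη
  have hα : (0:ℝ) < α := lt_trans hη0 hαη
  have hcont : ContinuousOn (fun u : ℝ => (c + u ^ α) ^ (-(1/η))) (Set.Ici 0) :=
    fun x hx => (phi_contAt hc hα hx).continuousWithinAt
  have h1 : IntegrableOn (fun u : ℝ => (c + u ^ α) ^ (-(1/η))) (Set.Ioc 0 1) :=
    ((hcont.mono (by intro x hx; exact hx.1 : Icc (0:ℝ) 1 ⊆ Ici 0)).integrableOn_Icc).mono_set
      Ioc_subset_Icc_self
  have h2 : IntegrableOn (fun u : ℝ => (c + u ^ α) ^ (-(1/η))) (Set.Ioi 1) := by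
    have hlt : -(α/η) < -1 := by
      rw [neg_lt_neg_iff]
      exact (one_lt_div hη0).mpr hαη
    refine Integrable.mono' (integrableOn_Ioi_rpow_of_lt hlt one_pos)
      ((hcont.mono (show Set.Ioi (1:ℝ) ⊆ Set.Ici 0 from fun x (hx : x ∈ Set.Ioi (1:ℝ)) => Set.mem_Ici.mpr (le_of_lt (lt_of_lt_of_le one_pos (le_of_lt (Set.mem_Ioi.mp hx)))))).aestronglyMeasurable
        measurableSet_Ioi) ?_
    filter_upwards [ae_restrict_mem measurableSet_Ioi] with x hx
    have hx0 : (0:ℝ) < x := lt_trans one_pos hx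
    have hxa : (0:ℝ) < x ^ α := Real.rpow_pos_of_pos hx0 α
    rw [Real.norm_of_nonneg (le_of_lt (phi_pos hc hx0.le))]
    calc (c + x ^ α) ^ (-(1/η)) ≤ (x ^ α) ^ (-(1/η)) :=
          Real.rpow_le_rpow_of_nonpos hxa (le_add_of_nonneg_left hc.le)
            (neg_nonpos.mpr (by positivity))
      _ = x ^ (-(α/η)) := by
          rw [← Real.rpow_mul hx0.le]
          ring_nf
  have := h1.union h2
  rwa [Set.Ioc_union_Ioi_eq_Ioi (zero_le_one)] at this


lemma phi_scaling {C₆ δ α η : ℝ} (hC₆ : 0 < C₆) (hδ : 0 < δ) (hα : 0 < α) :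
    ∫ u in Set.Ioi (0:ℝ), (C₆ * δ + u ^ α) ^ (-(1/η))
      = δ ^ (1/α) * (δ ^ (-(1/η)) * ∫ x in Set.Ioi (0:ℝ), (C₆ + x ^ α) ^ (-(1/η))) := by
  have hb : (0:ℝ) < δ ^ (1/α) := Real.rpow_pos_of_pos hδ _
  have key := MeasureTheory.integral_comp_mul_left_Ioi
    (fun u : ℝ => (C₆ * δ + u ^ α) ^ (-(1/η))) 0 hb
  rw [mul_zero] at key
  have hcongr : ∫ x in Set.Ioi (0:ℝ), (C₆ * δ + (δ ^ (1/α) * x) ^ α) ^ (-(1/η))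
      = ∫ x in Set.Ioi (0:ℝ), δ ^ (-(1/η)) * (C₆ + x ^ α) ^ (-(1/η)) := by
    refine setIntegral_congr_fun measurableSet_Ioi (fun x hx => ?_)
    have hx0 : (0:ℝ) < x := hx
    have h1 : (δ ^ (1/α) * x) ^ α = δ * x ^ α := by
      rw [Real.mul_rpow hb.le hx0.le, ← Real.rpow_mul hδ.le,
        one_div_mul_cancel (ne_of_gt hα), Real.rpow_one]
    rw [h1, show C₆ * δ + δ * x ^ α = δ * (C₆ + x ^ α) by ring,
      Real.mul_rpow hδ.le (by positivity)]
  rw [hcongr, integral_const_mul] at key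
  have := congrArg (fun z => δ ^ (1/α) * z) key
  simp only [smul_eq_mul, ← mul_assoc, mul_inv_cancel₀ (ne_of_gt hb), one_mul] at this
  rw [← this]
  ring


lemma key_sub {T : ℝ} (hT : 0 < T) (h φ : ℝ → ℝ)
    (h0 : h 0 = 0)
    (hmono : MonotoneOn h (Set.Icc 0 T))
    (hhnn : ∀ t ∈ Set.Icc (0:ℝ) T, 0 ≤ h t)
    (hcont : ContinuousOn h (Set.Icc 0 T))
    (hder : ∀ a b : ℝ, 0 ≤ a → a ≤ b → b ≤ T → h b - h a = ∫ t in a..b, deriv h t)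
    (hder_int : IntervalIntegrable (deriv h) volume 0 T)
    (hf_int : IntervalIntegrable (fun t => deriv h t * φ (h t)) volume 0 T)
    (hd_nonneg : ∀ᵐ t ∂(volume.restrict (Set.Icc (0:ℝ) T)), 0 ≤ deriv h t)
    (hφcont : ContinuousOn φ (Set.Ici 0))
    (hφanti : ∀ u v : ℝ, 0 ≤ u → u ≤ v → φ v ≤ φ u)
    (hφnn : ∀ u : ℝ, 0 ≤ u → 0 ≤ φ u) :
    (∫ t in (0:ℝ)..T, deriv h t * φ (h t)) ≤ ∫ u in (0:ℝ)..(h T), φ u := by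
  refine le_of_forall_pos_le_add (fun ε hε => ?_)
  have hφ0 : 0 ≤ φ 0 := hφnn 0 le_rfl
  set ε' : ℝ := ε / (φ 0 + 1) with hε'def
  have hε' : 0 < ε' := div_pos hε (by linarith)
  -- uniform continuity
  obtain ⟨d, hd, hund⟩ := (Metric.uniformContinuousOn_iff.mp
    (isCompact_Icc.uniformContinuousOn_of_continuous hcont)) ε' hε'
  obtain ⟨n, hn⟩ := exists_nat_gt (T / d)
  have hn0 : (0:ℝ) < n := lt_of_le_of_lt (le_of_lt (div_pos hT hd)) hn
  have hnne : (n:ℝ) ≠ 0 := ne_of_gt hn0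
  have hTn : T / n < d := by
    rw [div_lt_iff₀ hn0]
    calc T = (T / d) * d := by field_simp
    _ < n * d := by exact mul_lt_mul_of_pos_right hn hd
    _ = d * n := mul_comm _ _
  set t : ℕ → ℝ := fun i => i * T / n with htdef
  have ht0 : t 0 = 0 := by simp [htdef]
  have htn : t n = T := by simp only [htdef]; field_simp
  have htmono : ∀ i j : ℕ, i ≤ j → t i ≤ t j := by
    intro i j hij
    have : (i:ℝ) ≤ j := Nat.cast_le.mpr hij
    simp only [htdef]
    gcongr
  have htmem : ∀ i : ℕ, i ≤ n → t i ∈ Set.Icc (0:ℝ) T := by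
    intro i hi
    constructor
    · simp only [htdef]; positivity
    · rw [← htn]; exact htmono i n hi
  have htdiff : ∀ i : ℕ, t (i+1) - t i = T / n := by
    intro i
    simp only [htdef]
    push_cast
    field_simp
    ring
  have huIcc : Set.uIcc (0:ℝ) T = Set.Icc 0 T := Set.uIcc_of_le hT.le
  -- per-step estimate
  have step : ∀ i : ℕ, i < n →
      (∫ u in t i..t (i+1), deriv h u * φ (h u))
        ≤ (∫ u in h (t i)..h (t (i+1)), φ u) + (φ (h (t i)) - φ (h (t (i+1)))) * ε' := by
    intro i hi
    set a := t i with hadef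
    set b := t (i+1) with hbdef
    have ha : a ∈ Set.Icc (0:ℝ) T := htmem i (le_of_lt hi)
    have hb : b ∈ Set.Icc (0:ℝ) T := htmem (i+1) (Nat.succ_le_of_lt hi)
    have hab : a ≤ b := htmono i (i+1) (Nat.le_succ i)
    have hsub : Set.Icc a b ⊆ Set.Icc (0:ℝ) T := Set.Icc_subset_Icc ha.1 hb.2
    have hsubu : Set.uIcc a b ⊆ Set.uIcc (0:ℝ) T := by
      rw [huIcc, Set.uIcc_of_le hab]; exact hsub
    have hm : h a ≤ h b := hmono ha hb hab
    have hha : 0 ≤ h a := hhnn a ha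
    have hhb : 0 ≤ h b := hhnn b hb
    have hΔ : h b - h a < ε' := by
      have hdist : dist a b < d := by
        rw [Real.dist_eq, abs_of_nonpos (by linarith), neg_sub, hbdef, hadef, htdiff i]
        exact hTn
      have := hund a ha b hb hdist
      rw [Real.dist_eq, abs_of_nonpos (by linarith)] at this
      linarith
    have hBA : φ (h b) ≤ φ (h a) := hφanti (h a) (h b) hha hm
    -- step 1
    have step1 : (∫ u in a..b, deriv h u * φ (h u)) ≤ φ (h a) * (h b - h a) := by
      have hmon : (∫ u in a..b, deriv h u * φ (h u))
          ≤ ∫ u in a..b, deriv h u * φ (h a) := by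
        refine intervalIntegral.integral_mono_ae_restrict hab
          (hf_int.mono_set hsubu) ((hder_int.mono_set hsubu).mul_const _) ?_
        filter_upwards [ae_restrict_of_ae_restrict_of_subset hsub hd_nonneg,
          ae_restrict_mem measurableSet_Icc] with u hu hmem
        have hu2 : u ∈ Set.Icc (0:ℝ) T := hsub hmem
        have : φ (h u) ≤ φ (h a) := hφanti (h a) (h u) hha (hmono ha hu2 hmem.1)
        exact mul_le_mul_of_nonneg_left this hu
      calc (∫ u in a..b, deriv h u * φ (h u)) ≤ ∫ u in a..b, deriv h u * φ (h a) := hmon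
        _ = (∫ u in a..b, deriv h u) * φ (h a) := intervalIntegral.integral_mul_const _ _
        _ = (h b - h a) * φ (h a) := by rw [← hder a b ha.1 hab hb.2]
        _ = φ (h a) * (h b - h a) := mul_comm _ _
    -- step 2
    have hφint : IntervalIntegrable φ volume (h a) (h b) := by
      refine (hφcont.mono ?_).intervalIntegrable
      rw [Set.uIcc_of_le hm]
      exact fun u hu => le_trans hha hu.1
    have step2 : φ (h b) * (h b - h a) ≤ ∫ u in h a..h b, φ u := by
      have := intervalIntegral.integral_mono_on hm (intervalIntegrable_const (c := φ (h b)))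
        hφint (fun u hu => hφanti u (h b) (le_trans hha hu.1) hu.2)
      rw [intervalIntegral.integral_const, smul_eq_mul] at this
      linarith [this]
    have hprod : (φ (h a) - φ (h b)) * (h b - h a) ≤ (φ (h a) - φ (h b)) * ε' :=
      mul_le_mul_of_nonneg_left hΔ.le (by linarith)
    nlinarith [step1, step2, hprod]
  -- sums
  have hsum1 : ∑ i ∈ Finset.range n, (∫ u in t i..t (i+1), deriv h u * φ (h u))
      = ∫ u in (0:ℝ)..T, deriv h u * φ (h u) := by
    rw [intervalIntegral.sum_integral_adjacent_intervals (fun k hk => ?_), ht0, htn]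
    refine hf_int.mono_set ?_
    rw [huIcc, Set.uIcc_of_le (htmono k (k+1) (Nat.le_succ k))]
    exact Set.Icc_subset_Icc (htmem k (le_of_lt hk)).1 (htmem (k+1) (Nat.succ_le_of_lt hk)).2
  have hsum2 : ∑ i ∈ Finset.range n, (∫ u in h (t i)..h (t (i+1)), φ u)
      = ∫ u in (0:ℝ)..(h T), φ u := by
    rw [intervalIntegral.sum_integral_adjacent_intervals (a := fun i => h (t i))
      (fun k hk => ?_), ht0, htn, h0]
    refine (hφcont.mono ?_).intervalIntegrable
    intro u hu
    have h1 : 0 ≤ h (t k) := hhnn _ (htmem k (le_of_lt hk))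
    have h2 : 0 ≤ h (t (k+1)) := hhnn _ (htmem (k+1) (Nat.succ_le_of_lt hk))
    rcases Set.mem_uIcc.mp hu with h3 | h3
    · exact le_trans h1 h3.1
    · exact le_trans h2 h3.1
  have hsum3 : ∑ i ∈ Finset.range n, (φ (h (t i)) - φ (h (t (i+1)))) * ε'
      = (φ (h 0) - φ (h T)) * ε' := by
    rw [← Finset.sum_mul, Finset.sum_range_sub' (f := fun i => φ (h (t i))), ht0, htn]
  have := Finset.sum_le_sum (fun i hi => step i (Finset.mem_range.mp hi))
  rw [hsum1] at this
  rw [Finset.sum_add_distrib, hsum2, hsum3] at this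
  have hlast : (φ (h 0) - φ (h T)) * ε' ≤ ε := by
    have h1 : φ (h T) ≥ 0 := hφnn _ (hhnn T ⟨hT.le, le_rfl⟩)
    have h2 : (φ (h 0) - φ (h T)) ≤ φ 0 := by rw [h0]; linarith
    have h3 : (φ (h 0) - φ (h T)) * ε' ≤ φ 0 * ε' :=
      mul_le_mul_of_nonneg_right h2 hε'.le
    have h4 : φ 0 * ε' ≤ ε := by
      rw [hε'def]
      calc φ 0 * (ε / (φ 0 + 1)) = ε * (φ 0 / (φ 0 + 1)) := by ring
        _ ≤ ε * 1 := by
            apply mul_le_mul_of_nonneg_left _ hε.le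
            rw [div_le_one (by linarith)]; linarith
        _ = ε := mul_one ε
    linarith
  linarith

end FinalStabilityHelpers


/-- Final stability estimate: if `α > η > 1`, `C₆, C₇, δ > 0`, and `h : [0,T] → [0,∞)`
is absolutely continuous, increasing, with `h 0 = 0`, satisfying
`1 ≤ C₇ δ^{1/η} h'(t) (C₆ δ + h(t)^α)^{-1/η}` a.e., then
`T ≤ C₈ δ^{1/α}` with `C₈ = C₇ ∫₀^∞ (C₆ + x^α)^{-1/η} dx`. -/
theorem final_stability (α η C₆ C₇ δ : ℝ) (hαη : η < α) (hη : 1 < η)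
    (hC₆ : 0 < C₆) (hC₇ : 0 < C₇) (hδ : 0 < δ)
    (T : ℝ) (hT : 0 ≤ T) (h : ℝ → ℝ)
    (h0 : h 0 = 0)
    (hnonneg : ∀ t ∈ Set.Icc (0:ℝ) T, 0 ≤ h t)
    (hmono : MonotoneOn h (Set.Icc 0 T))
    (hAC : ∀ a b : ℝ, 0 ≤ a → a ≤ b → b ≤ T → h b - h a = ∫ t in a..b, deriv h t)
    (hineq : ∀ᵐ t ∂(volume.restrict (Set.Icc (0:ℝ) T)),
      1 ≤ C₇ * δ ^ (1/η) * deriv h t * (C₆ * δ + h t ^ α) ^ (-(1/η))) :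
    T ≤ (C₇ * ∫ x in Set.Ioi (0:ℝ), (C₆ + x ^ α) ^ (-(1/η))) * δ ^ (1/α) := by
  have hη0 : (0:ℝ) < η := by linarith
  have hα : (0:ℝ) < α := by linarith
  have hc : (0:ℝ) < C₆ * δ := by positivity
  set φ : ℝ → ℝ := fun u => (C₆ * δ + u ^ α) ^ (-(1/η)) with hφdef
  have hInn : 0 ≤ ∫ x in Set.Ioi (0:ℝ), (C₆ + x ^ α) ^ (-(1/η)) :=
    setIntegral_nonneg measurableSet_Ioi (fun x hx =>
      Real.rpow_nonneg (add_nonneg hC₆.le (Real.rpow_nonneg (le_of_lt hx) α)) _)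
  rcases eq_or_lt_of_le hT with hT0 | hT0
  · rw [← hT0]
    exact mul_nonneg (mul_nonneg hC₇.le hInn) (Real.rpow_nonneg hδ.le _)
  have hφcont : ContinuousOn φ (Set.Ici 0) := fun x hx => (phi_contAt hc hα hx).continuousWithinAt
  have hφanti : ∀ u v : ℝ, 0 ≤ u → u ≤ v → φ v ≤ φ u := fun u v hu huv =>
    phi_anti hc hα.le (neg_nonpos.mpr (by positivity)) hu huv
  have hφpos : ∀ u : ℝ, 0 ≤ u → 0 < φ u := fun u hu => phi_pos hc hu
  have hφnn : ∀ u : ℝ, 0 ≤ u → 0 ≤ φ u := fun u hu => (hφpos u hu).le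
  -- case h T = 0
  rcases eq_or_lt_of_le (hnonneg T ⟨hT, le_rfl⟩) with hhT | hhT
  · exfalso
    have hzero : ∀ u ∈ Set.Icc (0:ℝ) T, h u = 0 := fun u hu =>
      le_antisymm (hhT ▸ hmono hu ⟨hT, le_rfl⟩ hu.2) (hnonneg u hu)
    have hderiv0 : ∀ u ∈ Set.Ioo (0:ℝ) T, deriv h u = 0 := by
      intro u hu
      have hev : h =ᶠ[nhds u] fun _ => 0 := by
        filter_upwards [isOpen_Ioo.mem_nhds hu] with v hv using hzero v ⟨hv.1.le, hv.2.le⟩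
      rw [hev.deriv_eq]
      exact deriv_const u 0
    have hae : ∀ᵐ u ∂(volume.restrict (Set.Ioo (0:ℝ) T)), False := by
      filter_upwards [ae_restrict_of_ae_restrict_of_subset Set.Ioo_subset_Icc_self hineq,
        ae_restrict_mem measurableSet_Ioo] with u hu hmem
      rw [hderiv0 u hmem] at hu
      simp only [mul_zero, zero_mul] at hu
      linarith
    rw [Filter.eventually_false_iff_eq_bot, ae_eq_bot, Measure.restrict_eq_zero,
      Real.volume_Ioo] at hae
    simp only [ENNReal.ofReal_eq_zero, sub_zero] at hae
    linarith
  -- main case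
  set K := C₇ * δ ^ (1/η) with hKdef
  have hK0 : 0 < K := by positivity
  have hder_int : IntervalIntegrable (deriv h) volume 0 T := by
    by_contra hcon
    have h2 := hAC 0 T le_rfl hT le_rfl
    rw [intervalIntegral.integral_undef hcon, h0] at h2
    linarith
  have hder_on : IntegrableOn (deriv h) (Set.Icc 0 T) volume :=
    (intervalIntegrable_iff_integrableOn_Icc_of_le hT).mp hder_int
  have hcont : ContinuousOn h (Set.Icc 0 T) := by
    have hprim : ContinuousOn (fun x => ∫ u in (0:ℝ)..x, deriv h u) (Set.Icc 0 T) := by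
      have := intervalIntegral.continuousOn_primitive_interval
        (a := 0) (b := T) (μ := volume) (f := deriv h) (by rwa [Set.uIcc_of_le hT])
      rwa [Set.uIcc_of_le hT] at this
    refine ContinuousOn.congr (f := fun x => (∫ u in (0:ℝ)..x, deriv h u) + h 0)
      (hprim.add continuousOn_const) (fun x hx => ?_)
    have := hAC 0 x le_rfl hx.1 hx.2
    simp only [Pi.add_apply]
    linarith
  have hd_nonneg : ∀ᵐ u ∂(volume.restrict (Set.Icc (0:ℝ) T)), 0 ≤ deriv h u := by
    filter_upwards [hineq, ae_restrict_mem measurableSet_Icc] with u hu hmem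
    by_contra hneg
    push_neg at hneg
    have hp : 0 < (C₆ * δ + h u ^ α) ^ (-(1/η)) := hφpos _ (hnonneg u hmem)
    have : K * deriv h u * (C₆ * δ + h u ^ α) ^ (-(1/η)) < 0 :=
      mul_neg_of_neg_of_pos (mul_neg_of_pos_of_neg hK0 hneg) hp
    linarith
  have hφh_cont : ContinuousOn (fun u => φ (h u)) (Set.Icc 0 T) :=
    hφcont.comp hcont (fun u hu => hnonneg u hu)
  have hf_int : IntervalIntegrable (fun u => deriv h u * φ (h u)) volume 0 T := by
    rw [intervalIntegrable_iff_integrableOn_Icc_of_le hT]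
    refine Integrable.mono' (hder_on.const_mul (φ 0)) ?_ ?_
    · exact ((measurable_deriv h).aestronglyMeasurable).mul
        (hφh_cont.aestronglyMeasurable measurableSet_Icc)
    · filter_upwards [hd_nonneg, ae_restrict_mem measurableSet_Icc] with u hu hmem
      rw [Real.norm_of_nonneg (mul_nonneg hu (hφnn _ (hnonneg u hmem)))]
      calc deriv h u * φ (h u) ≤ deriv h u * φ 0 :=
            mul_le_mul_of_nonneg_left (hφanti 0 (h u) le_rfl (hnonneg u hmem)) hu
        _ = φ 0 * deriv h u := mul_comm _ _
  have hT_le : T ≤ K * ∫ u in (0:ℝ)..T, deriv h u * φ (h u) := by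
    have h1 : (∫ _ in (0:ℝ)..T, (1:ℝ)) ≤ ∫ u in (0:ℝ)..T, K * (deriv h u * φ (h u)) := by
      refine intervalIntegral.integral_mono_ae_restrict hT intervalIntegrable_const
        (hf_int.const_mul K) ?_
      filter_upwards [hineq] with u hu
      calc (1:ℝ) ≤ C₇ * δ ^ (1/η) * deriv h u * (C₆ * δ + h u ^ α) ^ (-(1/η)) := hu
        _ = K * (deriv h u * φ (h u)) := by rw [hKdef, hφdef]; ring
    rw [intervalIntegral.integral_const, intervalIntegral.integral_const_mul] at h1
    simpa using h1
  have hkey := key_sub hT0 h φ h0 hmono hnonneg hcont hAC hder_int hf_int hd_nonneg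
    hφcont hφanti hφnn
  have hGle : (∫ u in (0:ℝ)..(h T), φ u) ≤ ∫ u in Set.Ioi (0:ℝ), φ u := by
    rw [intervalIntegral.integral_of_le (hnonneg T ⟨hT, le_rfl⟩)]
    refine setIntegral_mono_set (by rw [hφdef]; exact phi_integrable hc hη hαη) ?_
      (Set.Ioc_subset_Ioi_self.eventuallyLE)
    filter_upwards [ae_restrict_mem measurableSet_Ioi] with u hu
    exact hφnn u hu.le
  have hone : δ ^ (1/η) * δ ^ (-(1/η)) = 1 := by
    rw [← Real.rpow_add hδ]; simp
  calc T ≤ K * ∫ u in (0:ℝ)..T, deriv h u * φ (h u) := hT_le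
    _ ≤ K * ∫ u in (0:ℝ)..(h T), φ u := mul_le_mul_of_nonneg_left hkey hK0.le
    _ ≤ K * ∫ u in Set.Ioi (0:ℝ), φ u := mul_le_mul_of_nonneg_left hGle hK0.le
    _ = (C₇ * ∫ x in Set.Ioi (0:ℝ), (C₆ + x ^ α) ^ (-(1/η))) * δ ^ (1/α) := by
        rw [hKdef, hφdef, phi_scaling hC₆ hδ hα]
        set I := ∫ x in Set.Ioi (0:ℝ), (C₆ + x ^ α) ^ (-(1/η))
        calc C₇ * δ ^ (1/η) * (δ ^ (1/α) * (δ ^ (-(1/η)) * I))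
            = (C₇ * I) * δ ^ (1/α) * (δ ^ (1/η) * δ ^ (-(1/η))) := by ring
          _ = (C₇ * I) * δ ^ (1/α) := by rw [hone, mul_one]
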